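/- For every integer n ≥ 11 and every real s with 0 < s ≤ n²/2, d_n(−2s/n) ≥ ( e^{√(s/2)} − e^{−√(s/2)} ) / √(10·s). -/

import Mathlib

open Finset

noncomputable section

/-- The `(n-1) x (n-1)` symmetric matrix `K_n` with entries
`K_n(j,k) = min(j,k)/n - jk/n^2` for `1 <= j, k <= n-1`. -/
def Kmat (n : ℕ) : Matrix (Fin (n - 1)) (Fin (n - 1)) ℝ := fun j k =>
  ((min (j.1 + 1) (k.1 + 1) : ℕ) : ℝ) / n
    - ((j.1 + 1 : ℕ) : ℝ) * ((k.1 + 1 : ℕ) : ℝ) / (n : ℝ) ^ 2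

/-- The alternative characteristic polynomial `d_n(lam) = det(I_{n-1} - lam * K_n)`. -/
def dpoly (n : ℕ) (lam : ℝ) : ℝ := Matrix.det (1 - lam • Kmat n)

/-!
`n K_n` is the inverse of the tridiagonal matrix `T = tridiag(-1, 2, -1)` of size `n - 1`: its
entries are the Green's function of the discrete Dirichlet Laplacian on `{0, …, n}`. Multiplying by
`T` (of determinant `n`) gives `n d_n(λ) = det (T - (λ/n) I)`, and the determinant of the
tridiagonal matrix `tridiag(-1, a, -1)` of size `m` is the Chebyshev polynomial `S_m(a)`.
Writing `2 - λ/n = 2 cosh θ` yields `d_n(λ) = sinh (nθ) / (n sinh θ)`. For `λ = -2s/n` we have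
`cosh θ = 1 + s/n²`, and as long as `s/n² ≤ 1/2` this forces `nθ ≥ √(s/2)` and
`2n sinh θ ≤ √(10 s)`.
-/

open Matrix Polynomial.Chebyshev Real

section Tridiag

variable {R : Type*} [CommRing R]

def tridiag (a : R) (m : ℕ) : Matrix (Fin m) (Fin m) R :=
  Matrix.of fun i j =>
    if (i : ℕ) = j then a else if (i : ℕ) + 1 = j ∨ (j : ℕ) + 1 = i then -1 else 0

@[simp]
theorem tridiag_succ_succ (a : R) (m : ℕ) (i j : Fin m) :
    tridiag a (m + 1) i.succ j.succ = tridiag a m i j := by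
  simp [tridiag]

theorem det_tridiag_add_two (a : R) (m : ℕ) :
    (tridiag a (m + 2)).det = a * (tridiag a (m + 1)).det - (tridiag a m).det := by
  have hminor₀ : (tridiag a (m + 2)).submatrix Fin.succ Fin.succ = tridiag a (m + 1) := by
    ext i j
    simp
  have hminor₁ : ((tridiag a (m + 2)).submatrix Fin.succ (Fin.succAbove 1)).det =
      -(tridiag a m).det := by
    have h₁₀ : tridiag a (m + 2) 1 0 = -1 := by simp [tridiag]
    have hcol : ∀ i : Fin m, tridiag a (m + 2) i.succ.succ 0 = 0 := fun i => by simp [tridiag]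
    have hrest : (tridiag a (m + 2)).submatrix (Fin.succ ∘ Fin.succ)
        (Fin.succAbove 1 ∘ Fin.succ) = tridiag a m := by
      ext i j
      simp [Fin.succAbove, Fin.lt_def]
    rw [det_succ_column_zero, Fin.sum_univ_succ]
    simp [h₁₀, hcol, hrest]
  have h₀₀ : tridiag a (m + 2) 0 0 = a := by simp [tridiag]
  have h₀₁ : tridiag a (m + 2) 0 1 = -1 := by simp [tridiag]
  have hrow : ∀ j : Fin m, tridiag a (m + 2) 0 j.succ.succ = 0 := fun j => by simp [tridiag]
  rw [det_succ_row_zero, Fin.sum_univ_succ, Fin.sum_univ_succ]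
  simp [hminor₀, hminor₁, h₀₀, h₀₁, hrow]
  ring

theorem det_tridiag (a : R) (m : ℕ) : (tridiag a m).det = (S R m).eval a := by
  induction m using Nat.strong_induction_on with
  | _ m ih =>
    match m with
    | 0 => simp
    | 1 => simp [tridiag]
    | m + 2 =>
      rw [det_tridiag_add_two, ih m (by omega), ih (m + 1) (by omega)]
      push_cast
      simp [S_add_two]

theorem tridiag_sub_smul_one (a c : R) (m : ℕ) : tridiag a m - c • 1 = tridiag (a - c) m := by
  ext i j
  simp only [tridiag, Matrix.sub_apply, Matrix.smul_apply, Matrix.one_apply, of_apply, Fin.ext_iff,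
    smul_eq_mul]
  split_ifs <;> simp

theorem Fin.sum_univ_ite_val_eq {M : Type*} [AddCommMonoid M] (m c : ℕ) (x : M) :
    (∑ i : Fin m, if (i : ℕ) = c then x else 0) = if c < m then x else 0 := by
  simp [Fin.sum_univ_eq_sum_range (fun i => if i = c then x else 0)]

theorem tridiag_mulVec (a : R) (m : ℕ) (f : ℕ → R) (h₀ : f 0 = 0) (hm : f (m + 1) = 0)
    (j : Fin m) : (tridiag a m *ᵥ fun i => f (i + 1)) j = a * f (j + 1) - f j - f (j + 2) := by
  have hterm : ∀ i : Fin m, tridiag a m j i * f (i + 1) =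
      (if (i : ℕ) = j then a * f (j + 1) else 0) + (if (i : ℕ) = j - 1 then -f j else 0) +
        (if (i : ℕ) = j + 1 then -f (j + 2) else 0) := by
    intro i
    simp only [tridiag, of_apply]
    split_ifs <;> grind
  simp only [mulVec, dotProduct, hterm, sum_add_distrib, Fin.sum_univ_ite_val_eq]
  have hj : (j : ℕ) < m := j.isLt
  have hj' : (j : ℕ) - 1 < m := by omega
  by_cases hlast : (j : ℕ) + 1 < m
  · simp [hj, hj', hlast, sub_eq_add_neg]
  · simp [hj, hj', hlast, show (j : ℕ) + 2 = m + 1 by omega, hm, sub_eq_add_neg]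

end Tridiag

/-- `Kmat n j k = greenFn n (j + 1) (k + 1)`, extended to the boundary indices `0` and `n`. -/
def greenFn (n i k : ℕ) : ℝ := ((min i k : ℕ) : ℝ) / n - (i : ℝ) * k / (n : ℝ) ^ 2

theorem greenFn_zero_left (n k : ℕ) : greenFn n 0 k = 0 := by
  simp [greenFn]

theorem greenFn_self_left {n k : ℕ} (hk : k ≤ n) : greenFn n n k = 0 := by
  rw [greenFn, min_eq_right hk]
  rcases eq_or_ne (n : ℝ) 0 with hn | hn
  · simp [hn]
  · field_simp
    ring

theorem greenFn_second_diff (n j k : ℕ) :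
    2 * greenFn n (j + 1) k - greenFn n j k - greenFn n (j + 2) k =
      (n : ℝ)⁻¹ * if j + 1 = k then 1 else 0 := by
  have hmin : (2 * min (j + 1) k : ℝ) = min j k + min (j + 2) k + if j + 1 = k then 1 else 0 := by
    exact_mod_cast (show 2 * min (j + 1) k = min j k + min (j + 2) k + if j + 1 = k then 1 else 0
      by split_ifs <;> omega)
  simp only [greenFn]
  push_cast at hmin ⊢
  linear_combination (n : ℝ)⁻¹ * hmin

theorem tridiag_two_mul_Kmat {n : ℕ} (hn : 0 < n) :
    tridiag 2 (n - 1) * Kmat n = (n : ℝ)⁻¹ • 1 := by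
  ext j k
  have hcol := tridiag_mulVec 2 (n - 1) (fun i => greenFn n i (k + 1)) (greenFn_zero_left n _)
    (by simpa [Nat.sub_add_cancel hn] using greenFn_self_left (by omega : (k : ℕ) + 1 ≤ n)) j
  calc (tridiag 2 (n - 1) * Kmat n : Matrix (Fin (n - 1)) (Fin (n - 1)) ℝ) j k
      = (tridiag 2 (n - 1) *ᵥ fun i => greenFn n (i + 1) (k + 1)) j := rfl
    _ = (n : ℝ)⁻¹ * if (j : ℕ) + 1 = k + 1 then 1 else 0 := by
      rw [hcol, ← greenFn_second_diff]
    _ = ((n : ℝ)⁻¹ • (1 : Matrix (Fin (n - 1)) (Fin (n - 1)) ℝ)) j k := by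
      simp [Matrix.one_apply, Fin.ext_iff]

theorem natCast_mul_dpoly {n : ℕ} (hn : 0 < n) (lam : ℝ) :
    n * dpoly n lam = (S ℝ (n - 1 : ℕ)).eval (2 - lam / n) := by
  have hprod : tridiag 2 (n - 1) * (1 - lam • Kmat n) = tridiag (2 - lam / n) (n - 1) := by
    rw [Matrix.mul_sub, Matrix.mul_one, Matrix.mul_smul, tridiag_two_mul_Kmat hn, smul_smul,
      ← tridiag_sub_smul_one, div_eq_mul_inv]
  have hdet := congrArg Matrix.det hprod
  rw [det_mul, det_tridiag, det_tridiag, S_eval_two] at hdet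
  rw [dpoly, ← hdet]
  push_cast [Nat.cast_sub hn]
  ring

theorem dpoly_eq_sinh_div {n : ℕ} (hn : 0 < n) {θ : ℝ} (hθ : θ ≠ 0) :
    dpoly n (2 * n * (1 - cosh θ)) = sinh (n * θ) / (n * sinh θ) := by
  have hn' : (n : ℝ) ≠ 0 := by positivity
  have h := natCast_mul_dpoly hn (2 * n * (1 - cosh θ))
  rw [show 2 - 2 * n * (1 - cosh θ) / n = 2 * cosh θ by field_simp; ring] at h
  have hS := S_two_mul_real_cosh θ (n - 1 : ℕ)
  rw [← h] at hS
  push_cast [Nat.cast_sub hn] at hS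
  rw [sub_add_cancel] at hS
  rw [eq_div_iff (mul_ne_zero hn' (sinh_ne_zero.mpr hθ)), ← hS]
  ring

theorem Real.cosh_le_one_add_two_mul_sq {x : ℝ} (hx : x ^ 2 ≤ 3 / 2) :
    cosh x ≤ 1 + 2 * x ^ 2 := by
  calc cosh x ≤ exp (x ^ 2 / 2) := cosh_le_exp_half_sq x
    _ ≤ 1 / (1 - x ^ 2 / 2) := exp_bound_div_one_sub_of_interval (by positivity) (by linarith)
    _ ≤ 1 + 2 * x ^ 2 := by
      rw [div_le_iff₀ (by linarith)]
      nlinarith [sq_nonneg x]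

theorem Real.sqrt_half_le_arcosh_one_add {t : ℝ} (ht₀ : 0 ≤ t) (ht : t ≤ 3) :
    √(t / 2) ≤ arcosh (1 + t) := by
  have hsq : √(t / 2) ^ 2 = t / 2 := sq_sqrt (by positivity)
  have hcosh : cosh √(t / 2) ≤ cosh (arcosh (1 + t)) := by
    rw [cosh_arcosh (by linarith)]
    linarith [cosh_le_one_add_two_mul_sq (x := √(t / 2)) (by linarith)]
  rw [cosh_le_cosh, abs_of_nonneg (sqrt_nonneg _),
    abs_of_nonneg (arcosh_nonneg (by linarith : 1 ≤ 1 + t))] at hcosh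
  exact hcosh

theorem Real.sinh_arcosh_one_add_sq_le {t : ℝ} (ht₀ : 0 ≤ t) (ht : t ≤ 1 / 2) :
    sinh (arcosh (1 + t)) ^ 2 ≤ 5 / 2 * t := by
  rw [sinh_arcosh (by linarith), sq_sqrt (by nlinarith)]
  nlinarith

theorem dpoly_ge_sinh_general (n : ℕ) (s : ℝ) (hs : 0 < s)
    (hs' : s ≤ (n : ℝ) ^ 2 / 2) :
    (Real.exp (Real.sqrt (s / 2)) - Real.exp (-Real.sqrt (s / 2))) / Real.sqrt (10 * s)
      ≤ dpoly n (-2 * s / n) := by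
  have hn : 0 < n := Nat.pos_of_ne_zero fun h => by subst h; norm_num at hs'; linarith
  have hn' : (0 : ℝ) < n := by exact_mod_cast hn
  obtain ⟨t, ht₀, ht₁, rfl⟩ : ∃ t, 0 < t ∧ t ≤ 1 / 2 ∧ s = n ^ 2 * t :=
    ⟨s / n ^ 2, by positivity, by rw [div_le_iff₀ (by positivity)]; linarith, by field_simp⟩
  set θ := arcosh (1 + t)
  have hθ : 0 < θ := arcosh_pos (by linarith)
  have hr : √(n ^ 2 * t / 2) ≤ n * θ := by
    rw [mul_div_assoc, sqrt_mul (by positivity), sqrt_sq hn'.le]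
    gcongr
    exact sqrt_half_le_arcosh_one_add ht₀.le (by linarith)
  have hsinh : 2 * n * sinh θ ≤ √(10 * (n ^ 2 * t)) := by
    rw [Real.le_sqrt (by positivity) (by positivity)]
    nlinarith [sinh_arcosh_one_add_sq_le ht₀.le ht₁, sq_nonneg (n : ℝ)]
  rw [show -2 * (n ^ 2 * t) / n = 2 * n * (1 - cosh θ) by
      rw [cosh_arcosh (by linarith)]; field_simp; ring,
    dpoly_eq_sinh_div hn hθ.ne']
  set r := √(n ^ 2 * t / 2)
  calc (exp r - exp (-r)) / √(10 * (n ^ 2 * t)) = 2 * sinh r / √(10 * (n ^ 2 * t)) := by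
        rw [sinh_eq]; ring
    _ ≤ 2 * sinh (n * θ) / (2 * n * sinh θ) :=
      div_le_div₀ (by positivity) (by gcongr; exact sinh_le_sinh.mpr hr) (by positivity) hsinh
    _ = sinh (n * θ) / (n * sinh θ) := by rw [mul_assoc, mul_div_mul_left _ _ two_ne_zero]

/-- For `n >= 11` and `0 < s <= n^2/2`,
`d_n(-2s/n) >= (e^{sqrt(s/2)} - e^{-sqrt(s/2)}) / sqrt(10 s)`. -/
theorem dpoly_ge_sinh (n : ℕ) (hn : 11 ≤ n) (s : ℝ) (hs : 0 < s)
    (hs' : s ≤ (n : ℝ) ^ 2 / 2) :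
    (Real.exp (Real.sqrt (s / 2)) - Real.exp (-Real.sqrt (s / 2))) / Real.sqrt (10 * s)
      ≤ dpoly n (-2 * s / n) :=
  dpoly_ge_sinh_general n s hs hs'

end
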